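/- arXiv:1007.3043 — 2 statements merged into one kernel-verified Lean document; each statement's English description precedes it below -/
import Mathlib

section
/- Let ψ = Σᵢ₌₁ⁿ aᵢ eᵢ ∈ ℓ₂ⁿ with a₁ ≥ a₂ ≥ ... ≥ aₙ ≥ 0 and Σ aᵢ² ≤ 1. Then there exist l ∈ N, nonnegative coefficients β₁,...,β_l with Σ βₛ ≤ 2√(log₂ n), and nonempty subsets A₁,...,A_l of {1,...,n} such that ψ = Σₛ βₛ φₛ where φₛ = |Aₛ|^{−1/2} Σ_{i∈Aₛ} eᵢ. -/
/-!
Layer-cake decomposition: with `a` extended by `aₙ = 0` and indices starting at `0`,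
`ψ = Σₛ (aₛ - aₛ₊₁) 1_{[0, s]} = Σₛ βₛ φₛ` for `Aₛ = [0, s]` and
`βₛ = (aₛ - aₛ₊₁) √(s + 1) ≥ 0`. Summation by parts turns `Σ βₛ` into
`Σₖ aₖ (√(k + 1) - √k)`, and Cauchy–Schwarz bounds this by
`‖a‖ (Σₖ (√(k + 1) - √k)²)^{1/2} ≤ (1 + ½ ln n)^{1/2} ≤ 2 √(log₂ n)`, because
`(√(k + 1) - √k)² ≤ ½ (ln (k + 1) - ln k)` for `k ≥ 1`.
-/

open Finset Real

lemma sq_sqrt_add_one_sub_sqrt_le {x : ℝ} (hx : 1 ≤ x) :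
    (√(x + 1) - √x) ^ 2 ≤ (log (x + 1) - log x) / 2 := by
  have hlog : 1 / (x + 1) ≤ log (x + 1) - log x := by
    rw [← log_div (by positivity) (by positivity)]
    convert one_sub_inv_le_log_of_pos (x := (x + 1) / x) (by positivity) using 1
    field_simp
    ring
  have ha := sq_sqrt (show 0 ≤ x by positivity)
  have hb := sq_sqrt (show 0 ≤ x + 1 by positivity)
  have ha1 : 1 ≤ √x := one_le_sqrt.mpr hx
  have hab : √x ≤ √(x + 1) := sqrt_le_sqrt (by linarith)
  -- `(√(x+1) - √x)(√(x+1) + √x) = 1` and `(√(x+1) + √x)² ≥ 2(x+1)`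
  have hsq : (√(x + 1) - √x) ^ 2 * (2 * (x + 1)) ≤ 1 := by
    nlinarith [mul_nonneg (sq_nonneg (√(x + 1) - √x)) (sub_nonneg.mpr ha1)]
  rw [div_le_iff₀ (by positivity)] at hlog
  nlinarith

lemma sum_range_sq_sqrt_succ_sub_sqrt_le (n : ℕ) :
    ∑ k ∈ range n, (√(k + 1) - √k) ^ 2 ≤ 1 + log n / 2 := by
  rcases Nat.eq_zero_or_pos n with rfl | hn
  · simp
  induction n, hn using Nat.le_induction with
  | base => simp
  | succ n hn ih =>
    rw [sum_range_succ]
    have := sq_sqrt_add_one_sub_sqrt_le (x := n) (by exact_mod_cast hn)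
    push_cast
    linarith

lemma sqrt_one_add_log_div_two_le {x : ℝ} (hx : 2 ≤ x) :
    √(1 + log x / 2) ≤ 2 * √(logb 2 x) := by
  have hlog2 : log 2 ≤ log x := log_le_log (by norm_num) hx
  have h2pos : 0 < log 2 := log_pos (by norm_num)
  have : 1 + log x / 2 ≤ 4 * logb 2 x := by
    rw [logb, mul_div_assoc', le_div_iff₀ h2pos]
    nlinarith [log_two_lt_d9]
  calc √(1 + log x / 2) ≤ √(2 ^ 2 * logb 2 x) := sqrt_le_sqrt (by linarith)
    _ = 2 * √(logb 2 x) := by rw [sqrt_mul (by positivity), sqrt_sq (by norm_num)]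

theorem Finset.sum_range_sub_mul_succ {R : Type*} [CommRing R] (g f : ℕ → R) (m : ℕ) :
    ∑ k ∈ range m, (g k - g (k + 1)) * f (k + 1)
      = ∑ k ∈ range m, g k * (f (k + 1) - f k) + g 0 * f 0 - g m * f m := by
  induction m with
  | zero => simp
  | succ m ih => rw [sum_range_succ, sum_range_succ, ih]; ring

lemma sum_range_mul_sqrt_succ_sub_sqrt_le (g : ℕ → ℝ) (n : ℕ)
    (hg : ∑ k ∈ range n, g k ^ 2 ≤ 1) :
    ∑ k ∈ range n, g k * (√(k + 1) - √k) ≤ √(1 + log n / 2) :=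
  calc ∑ k ∈ range n, g k * (√(k + 1) - √k)
      ≤ √(∑ k ∈ range n, g k ^ 2) * √(∑ k ∈ range n, (√(k + 1) - √k) ^ 2) :=
        sum_mul_le_sqrt_mul_sqrt _ _ _
    _ ≤ 1 * √(1 + log n / 2) := by
        gcongr
        · exact sqrt_le_one.mpr hg
        · exact sum_range_sq_sqrt_succ_sub_sqrt_le n
    _ = √(1 + log n / 2) := one_mul _

def extendByZero {α : Type*} [Zero α] {n : ℕ} (a : Fin n → α) (k : ℕ) : α :=
  if h : k < n then a ⟨k, h⟩ else 0

section extendByZero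

variable {α : Type*} [Zero α] {n : ℕ} (a : Fin n → α)

@[simp]
lemma extendByZero_coe (i : Fin n) : extendByZero a i = a i := by
  simp [extendByZero]

lemma extendByZero_of_le {k : ℕ} (hk : n ≤ k) : extendByZero a k = 0 := by
  simp [extendByZero, hk]

lemma antitone_extendByZero [Preorder α] {a : Fin n → α} (ha : Antitone a)
    (h0 : ∀ i, 0 ≤ a i) :
    Antitone (extendByZero a) := by
  refine antitone_nat_of_succ_le fun k => ?_
  unfold extendByZero
  split_ifs with h1 h2 h2
  · exact ha (Fin.mk_le_mk.mpr k.le_succ)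
  · omega
  · exact h0 _
  · exact le_rfl

end extendByZero

lemma Fin.sum_univ_ite_le_sub_succ {R : Type*} [AddCommGroup R] {n : ℕ} (g : ℕ → R)
    (i : Fin n) :
    ∑ s : Fin n, (if i ≤ s then g s - g (s + 1) else 0) = g i - g n := by
  simp_rw [Fin.le_def]
  rw [Fin.sum_univ_eq_sum_range (fun k => if (i : ℕ) ≤ k then g k - g (k + 1) else 0) n,
    ← sum_filter]
  have : {k ∈ range n | (i : ℕ) ≤ k} = Ico (i : ℕ) n := by ext; simp [and_comm]
  rw [this, ← neg_sub, ← sum_Ico_sub g i.isLt.le, ← sum_neg_distrib]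
  simp

lemma eq_sum_layers (g : ℕ → ℝ) {n : ℕ} (hg : g n = 0) (i : Fin n) :
    g i = ∑ s : Fin n, (g s - g (s + 1)) * √(s + 1) *
      (if i ∈ Iic s then (√(#(Iic s)))⁻¹ else 0) := by
  have hterm (s : Fin n) : (g s - g (s + 1)) * √(s + 1) *
      (if i ∈ Iic s then (√(#(Iic s)))⁻¹ else 0) =
        if i ≤ s then g s - g (s + 1) else 0 := by
    simp only [mem_Iic, Fin.card_Iic]
    split_ifs
    · push_cast; field_simp
    · simp
  simp only [hterm, Fin.sum_univ_ite_le_sub_succ, hg, sub_zero]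

lemma sum_layer_weights_le (g : ℕ → ℝ) {n : ℕ} (hg : g n = 0)
    (hsq : ∑ k ∈ range n, g k ^ 2 ≤ 1) :
    ∑ s : Fin n, (g s - g (s + 1)) * √(s + 1) ≤ √(1 + log n / 2) := by
  have abel := sum_range_sub_mul_succ g (fun k : ℕ => √k) n
  push_cast at abel
  rw [Fin.sum_univ_eq_sum_range (fun k => (g k - g (k + 1)) * √(k + 1)) n, abel, hg]
  simpa using sum_range_mul_sqrt_succ_sub_sqrt_le g n hsq

/-- Any vector `ψ = Σ aᵢ eᵢ` with decreasing nonnegative coefficients and `Σ aᵢ² ≤ 1`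
can be written as `Σₛ βₛ φₛ` with `βₛ ≥ 0`, `Σ βₛ ≤ 2√(log₂ n)`, where each `φₛ`
is the normalized indicator vector of a nonempty subset `Aₛ ⊆ {1,…,n}`. -/
theorem stmt_4 {n : ℕ} (hn : 2 ≤ n) (a : Fin n → ℝ)
    (hmono : Antitone a) (hpos : ∀ i, 0 ≤ a i)
    (hnorm : ∑ i, (a i) ^ 2 ≤ 1) :
    ∃ (l : ℕ) (β : Fin l → ℝ) (A : Fin l → Finset (Fin n)),
      (∀ s, 0 ≤ β s) ∧
      (∀ s, (A s).Nonempty) ∧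
      (∑ s, β s ≤ 2 * Real.sqrt (Real.logb 2 n)) ∧
      (∀ i, a i = ∑ s, β s * (if i ∈ A s then (Real.sqrt (A s).card)⁻¹ else 0)) := by
  have hg_anti := antitone_extendByZero hmono hpos
  have hgn : extendByZero a n = 0 := extendByZero_of_le a le_rfl
  have hsq : ∑ k ∈ range n, extendByZero a k ^ 2 ≤ 1 := by
    rw [← Fin.sum_univ_eq_sum_range (fun k => extendByZero a k ^ 2)]
    simpa using hnorm
  refine ⟨n, fun s => (extendByZero a s - extendByZero a (s + 1)) * √(s + 1), Iic,
    fun s => ?_, fun _ => nonempty_Iic, ?_, fun i => ?_⟩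
  · exact mul_nonneg (sub_nonneg.mpr (hg_anti (Nat.le_succ _))) (sqrt_nonneg _)
  · exact (sum_layer_weights_le _ hgn hsq).trans
      (sqrt_one_add_log_div_two_le (by exact_mod_cast hn))
  · exact (extendByZero_coe a i).symm.trans (eq_sum_layers _ hgn i)
end

section
/- Let S be a convex subset of R^k contained in an affine subspace Aff(S), and let S_h = conv(S ∪ −S) ∩ (Aff(S) − x₀) for x₀ ∈ Aff(S) chosen so that Aff(S) − x₀ is the linear subspace parallel to Aff(S). Assuming S lies in an affine hyperplane not through the origin (so that the convex combination coefficients are determined), one has Ŝ := S − S = 2·S_h. -/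
open scoped Pointwise

theorem vectorSpan_le_ker_of_forall_eq {R E F : Type*} [Ring R] [AddCommGroup E] [Module R E]
    [AddCommGroup F] [Module R F] {S : Set E} (f : E →ₗ[R] F) {c : F}
    (hf : ∀ s ∈ S, f s = c) : vectorSpan R S ≤ LinearMap.ker f := by
  refine Submodule.span_le.2 ?_
  rintro v ⟨s, hs, s', hs', rfl⟩
  simp [vsub_eq_sub, hf s hs, hf s' hs']

section

variable {𝕜 E : Type*} [Field 𝕜] [LinearOrder 𝕜] [IsStrictOrderedRing 𝕜] [AddCommGroup E]
  [Module 𝕜 E]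

/-- `f` takes the value `a - b` at the point `a • s + b • (-t)` of the join, so such a point lies
in `ker f` only when it is the midpoint `a = b = 1/2`. -/
theorem convexJoin_neg_inter_ker_eq {S : Set E} (f : E →ₗ[𝕜] 𝕜) (hf : ∀ s ∈ S, f s = 1) :
    convexJoin 𝕜 S (-S) ∩ LinearMap.ker f = (2⁻¹ : 𝕜) • (S - S) := by
  ext y
  constructor
  · rintro ⟨hy, hfy⟩
    obtain ⟨s, hs, t, ht, a, b, ha, hb, hab, rfl⟩ := mem_convexJoin.1 hy
    have hft : f t = -1 := by
      rw [← neg_neg t, map_neg, hf _ (Set.mem_neg.1 ht)]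
    have hfab : a - b = 0 := by
      simpa [hf s hs, hft, sub_eq_add_neg] using hfy
    have ha : a = 2⁻¹ := by linear_combination (hab + hfab) / 2
    have hb : b = 2⁻¹ := by linear_combination (hab - hfab) / 2
    refine ⟨s - -t, ⟨s, hs, -t, Set.mem_neg.1 ht, rfl⟩, ?_⟩
    simp only [ha, hb]
    module
  · rintro ⟨_, ⟨s, hs, s', hs', rfl⟩, rfl⟩
    refine ⟨mem_convexJoin.2 ⟨s, hs, -s', Set.neg_mem_neg.2 hs', 2⁻¹, 2⁻¹, ?_⟩, ?_⟩
    · exact ⟨by positivity, by positivity, by norm_num, by module⟩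
    · simp [hf s hs, hf s' hs']

end

theorem stmt_13_general {k : ℕ} (S : Set (Fin k → ℝ)) (hS : Convex ℝ S)
    (f : (Fin k → ℝ) →ₗ[ℝ] ℝ) (hf : ∀ s ∈ S, f s = 1) :
    S - S =
      (2 : ℝ) • (convexHull ℝ (S ∪ -S) ∩
        ((affineSpan ℝ S).direction : Set (Fin k → ℝ))) := by
  rcases S.eq_empty_or_nonempty with rfl | hne
  · simp
  have hdir : ((affineSpan ℝ S).direction : Set (Fin k → ℝ)) ⊆ LinearMap.ker f := by
    rw [direction_affineSpan]
    exact vectorSpan_le_ker_of_forall_eq f hf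
  have hsub : (2⁻¹ : ℝ) • (S - S) ⊆ (affineSpan ℝ S).direction := by
    rintro _ ⟨v, hv, rfl⟩
    rw [direction_affineSpan]
    exact Submodule.smul_mem _ _ (vsub_set_subset_vectorSpan ℝ S hv)
  calc S - S = (2 : ℝ) • (2⁻¹ : ℝ) • (S - S) := by rw [smul_smul]; norm_num
    _ = (2 : ℝ) • (convexJoin ℝ S (-S) ∩ LinearMap.ker f ∩ (affineSpan ℝ S).direction) := by
      rw [convexJoin_neg_inter_ker_eq f hf, Set.inter_eq_left.2 hsub]
    _ = _ := by
      rw [← hS.convexHull_union hS.neg hne hne.neg, Set.inter_assoc,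
        Set.inter_eq_right.2 hdir]

/-- If a nonempty convex set `S` lies in an affine hyperplane `{f = 1}` not through
the origin, then the difference body `S − S` equals twice the intersection of the
absolutely convex hull `conv(S ∪ −S)` with the linear subspace parallel to `Aff(S)`
(the direction of the affine span of `S`). -/
theorem stmt_13 {k : ℕ} (S : Set (Fin k → ℝ)) (hS : Convex ℝ S) (hne : S.Nonempty)
    (f : (Fin k → ℝ) →ₗ[ℝ] ℝ) (hf : ∀ s ∈ S, f s = 1) :
    S - S =
      (2 : ℝ) • (convexHull ℝ (S ∪ -S) ∩
        ((affineSpan ℝ S).direction : Set (Fin k → ℝ))) :=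
  stmt_13_general S hS f hf
end
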